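/- arXiv:1412.6720 — 5 statements merged into one kernel-verified Lean document; each statement's English description precedes it below -/
import Mathlib

section
/- Let A be an M×K complex matrix with AᴴA invertible, A† = (AᴴA)⁻¹Aᴴ, P⊥ = I_M − A A†, Σ a K×K complex matrix, σ² a complex scalar, R = A Σ Aᴴ + σ² I_M, and let D and F be arbitrary M×K complex matrices. Then, evaluating the DML Hessian expression at trial steering matrix B = A, one has C := (Dᴴ P⊥ D) ⊙ (A† R A†ᴴ)ᵀ − (Dᴴ P⊥ R P⊥ D) ⊙ (A† A†ᴴ)ᵀ + (A† D) ⊙ (A† R P⊥ D)ᵀ + (A† D)ᵀ ⊙ (A† R P⊥ D) − I_K ⊙ (A† R P⊥ F)ᵀ = (Dᴴ P⊥ D) ⊙ Σᵀ; in particular the noise terms involving σ² cancel exactly (Hessian-value part of Theorem 1, equation (24)). -/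
open Matrix
open scoped Matrix

/-- Hessian-value part of Theorem 1 (equation (24)): evaluated at B = A the
Hessian expression C collapses to (Dᴴ P⊥ D) ⊙ Σᵀ and the noise terms cancel. -/
theorem stmt_4 {M K : ℕ} (A : Matrix (Fin M) (Fin K) ℂ)
    (hA : IsUnit (Aᴴ * A).det)
    (Adag : Matrix (Fin K) (Fin M) ℂ) (hAdag : Adag = (Aᴴ * A)⁻¹ * Aᴴ)
    (Pperp : Matrix (Fin M) (Fin M) ℂ)
    (hP : Pperp = (1 : Matrix (Fin M) (Fin M) ℂ) - A * Adag)
    (S : Matrix (Fin K) (Fin K) ℂ) (σ2 : ℂ)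
    (R : Matrix (Fin M) (Fin M) ℂ)
    (hR : R = A * S * Aᴴ + σ2 • (1 : Matrix (Fin M) (Fin M) ℂ))
    (D F : Matrix (Fin M) (Fin K) ℂ) :
    (Dᴴ * Pperp * D) ⊙ (Adag * R * Adagᴴ)ᵀ
      - (Dᴴ * Pperp * R * Pperp * D) ⊙ (Adag * Adagᴴ)ᵀ
      + (Adag * D) ⊙ (Adag * R * Pperp * D)ᵀ
      + (Adag * D)ᵀ ⊙ (Adag * R * Pperp * D)
      - (1 : Matrix (Fin K) (Fin K) ℂ) ⊙ (Adag * R * Pperp * F)ᵀ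
    = (Dᴴ * Pperp * D) ⊙ Sᵀ := by
  have h1 : Adag * A = 1 := by
    rw [hAdag, Matrix.mul_assoc]
    exact Matrix.nonsing_inv_mul _ hA
  have l1 : ∀ {n : ℕ} (X : Matrix (Fin K) (Fin n) ℂ), Adag * (A * X) = X := by
    intro n X; rw [← Matrix.mul_assoc, h1, Matrix.one_mul]
  have hAP : Aᴴ * Pperp = 0 := by
    rw [hP, Matrix.mul_sub, Matrix.mul_one, hAdag, ← Matrix.mul_assoc,
      ← Matrix.mul_assoc, Matrix.mul_nonsing_inv _ hA, Matrix.one_mul, sub_self]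
  have l2 : ∀ {n : ℕ} (X : Matrix (Fin M) (Fin n) ℂ), Aᴴ * (Pperp * X) = 0 := by
    intro n X; rw [← Matrix.mul_assoc, hAP, Matrix.zero_mul]
  have hPA : Pperp * A = 0 := by
    rw [hP, Matrix.sub_mul, Matrix.one_mul, Matrix.mul_assoc, h1, Matrix.mul_one, sub_self]
  have l4 : ∀ {n : ℕ} (X : Matrix (Fin K) (Fin n) ℂ), Pperp * (A * X) = 0 := by
    intro n X; rw [← Matrix.mul_assoc, hPA, Matrix.zero_mul]
  have hdP : Adag * Pperp = 0 := by
    rw [hP, Matrix.mul_sub, Matrix.mul_one, ← Matrix.mul_assoc, h1, Matrix.one_mul, sub_self]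
  have l3 : ∀ {n : ℕ} (X : Matrix (Fin M) (Fin n) ℂ), Adag * (Pperp * X) = 0 := by
    intro n X; rw [← Matrix.mul_assoc, hdP, Matrix.zero_mul]
  have hPPm : Pperp * Pperp = Pperp := by
    nth_rewrite 2 [hP]
    rw [Matrix.mul_sub, Matrix.mul_one, ← Matrix.mul_assoc, hPA, Matrix.zero_mul, sub_zero]
  have hPP : ∀ {n : ℕ} (X : Matrix (Fin M) (Fin n) ℂ), Pperp * (Pperp * X) = Pperp * X := by
    intro n X
    rw [← Matrix.mul_assoc, hPPm]
  have l5 : Aᴴ * Adagᴴ = 1 := by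
    rw [← Matrix.conjTranspose_mul, h1, Matrix.conjTranspose_one]
  have e1 : Adag * R * Adagᴴ = S + σ2 • (Adag * Adagᴴ) := by
    simp only [hR, Matrix.add_mul, Matrix.mul_add, Matrix.smul_mul, Matrix.mul_smul,
      Matrix.one_mul, Matrix.mul_one, Matrix.mul_assoc, l1, l5]
  have e2 : Dᴴ * Pperp * R * Pperp * D = σ2 • (Dᴴ * (Pperp * D)) := by
    simp only [hR, Matrix.add_mul, Matrix.mul_add, Matrix.smul_mul, Matrix.mul_smul,
      Matrix.one_mul, Matrix.mul_one, Matrix.mul_assoc, l4, hPP, Matrix.mul_zero, zero_add]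
  have e3 : ∀ (X : Matrix (Fin M) (Fin K) ℂ), Adag * R * Pperp * X = 0 := by
    intro X
    simp only [hR, Matrix.add_mul, Matrix.mul_add, Matrix.smul_mul, Matrix.mul_smul,
      Matrix.one_mul, Matrix.mul_one, Matrix.mul_assoc, l2, l3, Matrix.mul_zero, smul_zero,
      add_zero, zero_add]
  rw [e1, e2, e3, e3, Matrix.mul_assoc Dᴴ Pperp D]
  simp only [Matrix.transpose_add, Matrix.transpose_smul, Matrix.transpose_zero,
    Matrix.hadamard_add, Matrix.hadamard_smul, Matrix.smul_hadamard, Matrix.hadamard_zero,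
    Matrix.zero_hadamard]
  abel
end

section
/- Let B be an M×K complex matrix with BᴴB invertible, B† = (BᴴB)⁻¹Bᴴ, P⊥ = I_M − B B†, let D be an M×K complex matrix such that for every nonzero x ∈ ℂ^K the vector Dx does not lie in the column space of B, and let Σ be a K×K Hermitian positive definite matrix. Then the real K×K matrix H = 2 Re((Dᴴ P⊥ D) ⊙ Σᵀ) is symmetric positive definite (positive-definiteness part of Theorem 1: the DML Hessian at the true DOAs is positive definite). -/
/-!
`P⊥` is an orthogonal projection, so `Dᴴ P⊥ D = (P⊥ D)ᴴ (P⊥ D)`, and `P⊥ D` is injective because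
`P⊥ D x = 0` would put `D x = B (B† D x)` in the column space of `B`. Hence `Dᴴ P⊥ D` is positive
definite, so is `(Dᴴ P⊥ D) ⊙ Σᵀ` by the Schur product theorem, and for real `x` the quadratic form of
the entrywise real part is the real part of the complex quadratic form.
-/

open Matrix
open scoped Matrix ComplexOrder

namespace Matrix

variable {l m n 𝕜 : Type*} [RCLike 𝕜]

theorem isStarProjection_mul_inv_conjTranspose_mul_self_mul_conjTranspose [Fintype m] [Fintype n]
    [DecidableEq n] {B : Matrix m n 𝕜} (hB : IsUnit (Bᴴ * B).det) :
    IsStarProjection (B * ((Bᴴ * B)⁻¹ * Bᴴ)) where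
  isIdempotentElem := by
    rw [IsIdempotentElem]
    simp only [Matrix.mul_assoc]
    rw [← Matrix.mul_assoc Bᴴ B, ← Matrix.mul_assoc _ (Bᴴ * B), nonsing_inv_mul _ hB,
      Matrix.one_mul]
  isSelfAdjoint := by
    rw [IsSelfAdjoint, star_eq_conjTranspose, conjTranspose_mul, conjTranspose_mul,
      conjTranspose_nonsing_inv, conjTranspose_mul, conjTranspose_conjTranspose, Matrix.mul_assoc]

theorem conjTranspose_mul_mul_eq_of_isStarProjection [Fintype m] {P : Matrix m m 𝕜}
    (hP : IsStarProjection P) (D : Matrix m n 𝕜) : Dᴴ * P * D = (P * D)ᴴ * (P * D) := by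
  rw [conjTranspose_mul, ← star_eq_conjTranspose, hP.isSelfAdjoint.star_eq,
    ← Matrix.mul_assoc (Dᴴ * P), Matrix.mul_assoc Dᴴ P P, hP.isIdempotentElem.eq]

theorem mulVec_injective_one_sub_mul_mul [Fintype l] [Fintype m] [Fintype n] [DecidableEq m]
    {B : Matrix m n 𝕜} {D : Matrix m l 𝕜} (C : Matrix n m 𝕜)
    (hD : ∀ x : l → 𝕜, x ≠ 0 → D *ᵥ x ∉ LinearMap.range B.mulVecLin) :
    Function.Injective ((1 - B * C) * D).mulVec := by
  refine (LinearMap.ker_eq_bot (f := ((1 - B * C) * D).mulVecLin)).mp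
    (LinearMap.ker_eq_bot'.mpr fun x hx => ?_)
  by_contra hx0
  refine hD x hx0 ⟨C *ᵥ (D *ᵥ x), ?_⟩
  rw [mulVecLin_apply, ← mulVec_mulVec, sub_mulVec, one_mulVec, sub_eq_zero] at hx
  rw [mulVecLin_apply, mulVec_mulVec]
  exact hx.symm

theorem PosDef.map_re [Fintype n] {C : Matrix n n 𝕜} (hC : C.PosDef) :
    (C.map RCLike.re).PosDef := by
  refine PosDef.of_dotProduct_mulVec_pos ?_ fun x hx => ?_
  · ext i j
    simp [← hC.isHermitian.apply i j]
  · have hx' : (fun i => (x i : 𝕜)) ≠ 0 := fun h => hx (funext fun i => by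
      simpa using congr_fun h i)
    refine (hC.re_dotProduct_pos hx').trans_eq ?_
    simp [dotProduct, mulVec, Finset.mul_sum]

end Matrix

/-- Positive-definiteness part of Theorem 1: H = 2 Re((Dᴴ P⊥ D) ⊙ Σᵀ) is
symmetric positive definite. -/
theorem stmt_5 {M K : ℕ} (B D : Matrix (Fin M) (Fin K) ℂ)
    (hB : IsUnit (Bᴴ * B).det)
    (Pperp : Matrix (Fin M) (Fin M) ℂ)
    (hP : Pperp = (1 : Matrix (Fin M) (Fin M) ℂ) - B * ((Bᴴ * B)⁻¹ * Bᴴ))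
    (hD : ∀ x : Fin K → ℂ, x ≠ 0 → D *ᵥ x ∉ LinearMap.range B.mulVecLin)
    (S : Matrix (Fin K) (Fin K) ℂ) (hS : S.PosDef)
    (H : Matrix (Fin K) (Fin K) ℝ)
    (hH : H = Matrix.of fun i j => 2 * (((Dᴴ * Pperp * D) ⊙ Sᵀ) i j).re) :
    H.PosDef := by
  have hPperp : IsStarProjection Pperp :=
    hP ▸ (isStarProjection_mul_inv_conjTranspose_mul_self_mul_conjTranspose hB).one_sub
  have hA : (Dᴴ * Pperp * D).PosDef := by
    rw [conjTranspose_mul_mul_eq_of_isStarProjection hPperp]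
    exact .conjTranspose_mul_self _ (hP ▸ mulVec_injective_one_sub_mul_mul _ hD)
  have hH' : H = (2 : ℝ) • ((Dᴴ * Pperp * D) ⊙ Sᵀ).map RCLike.re := by
    ext i j
    simp [hH]
  rw [hH']
  exact (hA.hadamard hS.transpose).map_re.smul two_pos
end

section
/- Uniform linear array Lemma 2: Let M > K, let d : {1,…,M} → ℝ be an arithmetic progression (d_k = d_1 + (k−1)δ), λ > 0 a wavelength, and θ, ϑ ∈ ℝ^K direction vectors. Define the M×K steering matrices A and B by A_{k i} = exp(−j·(2π/λ)·d_k·sin θ_i)/√M and B_{k i} = exp(−j·(2π/λ)·d_k·sin ϑ_i)/√M, and the derivative matrix D by D_{k i} = (−j·(2π/λ)·cos ϑ_i) · d_k · B_{k i}. Let Σ be a K×K diagonal matrix with real diagonal entries. Assume BᴴB is invertible, and set B† = (BᴴB)⁻¹Bᴴ and P⊥ = I_M − B B†. Then for each i, the (i,i) entry of B† (A Σ Aᴴ) P⊥ D is a real number (its imaginary part is zero). -/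
/-!
If the sensor positions are symmetric about their centre, `d k + d (rev k) = s` (as for any
arithmetic progression), conjugating a steering matrix reverses its rows up to unimodular column
phases: `conj A = J A Φ_A` with `J` the exchange matrix and `Φ_A` diagonal unitary. Likewise
`conj D = J (D + B C) Φ_B` for a diagonal `C`. These relations propagate through every factor:
`conj B† = Φ_Bᴴ B† Jᴴ`, `conj P⊥ = J P⊥ Jᴴ`, `conj (A Σ Aᴴ) = J A Σ Aᴴ Jᴴ`, and the extra term
`B C` is annihilated by `P⊥`. Hence `conj Y = Φ_Bᴴ Y Φ_B` for `Y = B† A Σ Aᴴ P⊥ D`, and a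
congruence by a diagonal unitary leaves the diagonal unchanged, so `Y i i` is real.
-/

open Matrix ComplexConjugate

namespace Matrix

variable {m n α : Type*}

theorem conjTranspose_map_conj [CommRing α] [StarRing α] (X : Matrix m n α) :
    Xᴴ.map conj = (X.map conj)ᴴ := by
  ext; rfl

variable [Fintype m] [Fintype n]

theorem map_conj_mul_mul_conjTranspose [DecidableEq n] [CommRing α] [StarRing α]
    {J : Matrix m m α} {V : Matrix n n α} {A : Matrix m n α} {S : Matrix n n α}
    (hV : V ∈ unitaryGroup n α) (hA : A.map conj = J * A * V) (hS : S.map conj = S)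
    (hVS : Commute V S) : (A * S * Aᴴ).map conj = J * (A * S * Aᴴ) * Jᴴ := by
  have hVV : V * Vᴴ = 1 := Unitary.mul_star_self_of_mem hV
  rw [Matrix.map_mul, Matrix.map_mul, conjTranspose_map_conj, hA, hS, conjTranspose_mul,
    conjTranspose_mul]
  calc J * A * V * S * (Vᴴ * (Aᴴ * Jᴴ)) = J * A * (V * S * Vᴴ) * Aᴴ * Jᴴ := by
        simp only [Matrix.mul_assoc]
    _ = J * (A * S * Aᴴ) * Jᴴ := by
        rw [hVS.eq, Matrix.mul_assoc S, hVV, Matrix.mul_one]; simp only [Matrix.mul_assoc]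

theorem map_conj_gram [DecidableEq m] [CommRing α] [StarRing α] {J : Matrix m m α}
    {U : Matrix n n α} {B : Matrix m n α} (hJ : J ∈ unitaryGroup m α)
    (hB : B.map conj = J * B * U) : (Bᴴ * B).map conj = Uᴴ * (Bᴴ * B) * U := by
  have hJJ : Jᴴ * J = 1 := Unitary.star_mul_self_of_mem hJ
  rw [Matrix.map_mul, conjTranspose_map_conj, hB, conjTranspose_mul, conjTranspose_mul]
  calc Uᴴ * (Bᴴ * Jᴴ) * (J * B * U) = Uᴴ * Bᴴ * (Jᴴ * J) * B * U := by
        simp only [Matrix.mul_assoc]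
    _ = Uᴴ * (Bᴴ * B) * U := by rw [hJJ, Matrix.mul_one]; simp only [Matrix.mul_assoc]

variable [DecidableEq m] [DecidableEq n]

theorem map_nonsing_inv {β : Type*} [CommRing α] [CommRing β] (f : α →+* β)
    {G : Matrix n n α} (hG : IsUnit G.det) : G⁻¹.map f = (G.map f)⁻¹ :=
  (inv_eq_left_inv <| by
    rw [← Matrix.map_mul, nonsing_inv_mul _ hG, Matrix.map_one _ f.map_zero f.map_one]).symm

theorem permMatrix_mem_unitaryGroup [CommRing α] [StarRing α] (σ : Equiv.Perm n) :
    σ.permMatrix α ∈ unitaryGroup n α := by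
  rw [mem_unitaryGroup_iff', star_eq_conjTranspose, conjTranspose_permMatrix, ← permMatrix_mul,
    mul_inv_cancel, permMatrix_one]

theorem diagonal_mem_unitaryGroup [CommRing α] [StarRing α] {u : n → α}
    (hu : ∀ i, star (u i) * u i = 1) : diagonal u ∈ unitaryGroup n α := by
  rw [mem_unitaryGroup_iff', star_eq_conjTranspose, diagonal_conjTranspose, diagonal_mul_diagonal]
  exact diagonal_eq_one.mpr (funext hu)

section Conj

variable [CommRing α] [StarRing α]

theorem inv_conjTranspose_mul_mul_of_mem_unitaryGroup {U : Matrix n n α}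
    (hU : U ∈ unitaryGroup n α) (G : Matrix n n α) : (Uᴴ * G * U)⁻¹ = Uᴴ * G⁻¹ * U := by
  have hUU : Uᴴ * U = 1 := Unitary.star_mul_self_of_mem hU
  have hUU' : U * Uᴴ = 1 := Unitary.mul_star_self_of_mem hU
  rw [mul_inv_rev, mul_inv_rev, inv_eq_left_inv hUU, inv_eq_left_inv hUU', Matrix.mul_assoc]

variable {J : Matrix m m α} {U : Matrix n n α} {B : Matrix m n α} (hJ : J ∈ unitaryGroup m α)
  (hU : U ∈ unitaryGroup n α) (hB : B.map conj = J * B * U)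
include hJ hU hB

theorem map_conj_pinv (hBB : IsUnit (Bᴴ * B).det) :
    ((Bᴴ * B)⁻¹ * Bᴴ).map conj = Uᴴ * ((Bᴴ * B)⁻¹ * Bᴴ) * Jᴴ := by
  have hUU : U * Uᴴ = 1 := Unitary.mul_star_self_of_mem hU
  rw [Matrix.map_mul, map_nonsing_inv _ hBB, map_conj_gram hJ hB,
    inv_conjTranspose_mul_mul_of_mem_unitaryGroup hU, conjTranspose_map_conj, hB,
    conjTranspose_mul, conjTranspose_mul]
  calc Uᴴ * (Bᴴ * B)⁻¹ * U * (Uᴴ * (Bᴴ * Jᴴ))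
      = Uᴴ * (Bᴴ * B)⁻¹ * (U * Uᴴ) * Bᴴ * Jᴴ := by simp only [Matrix.mul_assoc]
    _ = Uᴴ * ((Bᴴ * B)⁻¹ * Bᴴ) * Jᴴ := by
        rw [hUU, Matrix.mul_one]; simp only [Matrix.mul_assoc]

theorem map_conj_orthProj (hBB : IsUnit (Bᴴ * B).det) :
    (1 - B * ((Bᴴ * B)⁻¹ * Bᴴ)).map conj = J * (1 - B * ((Bᴴ * B)⁻¹ * Bᴴ)) * Jᴴ := by
  have hJJ : J * Jᴴ = 1 := Unitary.mul_star_self_of_mem hJ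
  have hUU : U * Uᴴ = 1 := Unitary.mul_star_self_of_mem hU
  rw [Matrix.map_sub _ (map_sub _), Matrix.map_one _ (map_zero _) (map_one _), Matrix.map_mul,
    hB, map_conj_pinv hJ hU hB hBB, mul_sub, sub_mul, mul_one, hJJ]
  congr 1
  calc J * B * U * (Uᴴ * ((Bᴴ * B)⁻¹ * Bᴴ) * Jᴴ)
      = J * B * (U * Uᴴ) * ((Bᴴ * B)⁻¹ * Bᴴ) * Jᴴ := by simp only [Matrix.mul_assoc]
    _ = J * (B * ((Bᴴ * B)⁻¹ * Bᴴ)) * Jᴴ := by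
        rw [hUU, Matrix.mul_one]; simp only [Matrix.mul_assoc]

theorem map_conj_pinv_mul_mul_orthProj_mul (hBB : IsUnit (Bᴴ * B).det) {R : Matrix m m α}
    (hR : R.map conj = J * R * Jᴴ) {D : Matrix m n α} {C : Matrix n n α}
    (hD : D.map conj = J * (D + B * C) * U) :
    ((Bᴴ * B)⁻¹ * Bᴴ * R * (1 - B * ((Bᴴ * B)⁻¹ * Bᴴ)) * D).map conj
      = Uᴴ * ((Bᴴ * B)⁻¹ * Bᴴ * R * (1 - B * ((Bᴴ * B)⁻¹ * Bᴴ)) * D) * U := by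
  have hJJ : Jᴴ * J = 1 := Unitary.star_mul_self_of_mem hJ
  have hPB : (1 - B * ((Bᴴ * B)⁻¹ * Bᴴ)) * B = 0 := by
    rw [Matrix.sub_mul, Matrix.one_mul, Matrix.mul_assoc, Matrix.mul_assoc,
      nonsing_inv_mul _ hBB, Matrix.mul_one, sub_self]
  set P := 1 - B * ((Bᴴ * B)⁻¹ * Bᴴ)
  rw [Matrix.map_mul, Matrix.map_mul, Matrix.map_mul, map_conj_pinv hJ hU hB hBB, hR,
    map_conj_orthProj hJ hU hB hBB, hD]
  calc Uᴴ * ((Bᴴ * B)⁻¹ * Bᴴ) * Jᴴ * (J * R * Jᴴ) * (J * P * Jᴴ) * (J * (D + B * C) * U)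
      = Uᴴ * ((Bᴴ * B)⁻¹ * Bᴴ) * (Jᴴ * J) * R * (Jᴴ * J) * P * (Jᴴ * J) * (D + B * C) * U := by
        simp only [Matrix.mul_assoc]
    _ = Uᴴ * ((Bᴴ * B)⁻¹ * Bᴴ * R * (P * D + P * B * C)) * U := by
        rw [hJJ]; simp only [Matrix.mul_one, Matrix.mul_add, Matrix.mul_assoc]
    _ = Uᴴ * ((Bᴴ * B)⁻¹ * Bᴴ * R * P * D) * U := by
        rw [hPB, Matrix.zero_mul, add_zero]; simp only [Matrix.mul_assoc]

end Conj

theorem conj_apply_self_of_map_conj_eq [CommRing α] [StarRing α] {Y : Matrix n n α}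
    {u : n → α} (hu : ∀ i, star (u i) * u i = 1)
    (hY : Y.map conj = (diagonal u)ᴴ * Y * diagonal u) (i : n) : conj (Y i i) = Y i i := by
  have h := congrFun₂ hY i i
  rw [map_apply, diagonal_conjTranspose, mul_diagonal, diagonal_mul, Pi.star_apply] at h
  rw [h, mul_right_comm, hu, one_mul]

end Matrix

open Complex

section UniformLinearArray

variable {M K : ℕ}

noncomputable def steeringMatrix (d : Fin M → ℝ) (lam : ℝ) (θ : Fin K → ℝ) :
    Matrix (Fin M) (Fin K) ℂ :=
  Matrix.of fun k i =>
    exp (-I * ((2 * Real.pi / lam * d k * Real.sin (θ i) : ℝ) : ℂ)) / ((Real.sqrt M : ℝ) : ℂ)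

noncomputable def steeringDerivative (d : Fin M → ℝ) (lam : ℝ) (ϑ : Fin K → ℝ) :
    Matrix (Fin M) (Fin K) ℂ :=
  Matrix.of fun k i =>
    -I * ((2 * Real.pi / lam * Real.cos (ϑ i) : ℝ) : ℂ) * ((d k : ℝ) : ℂ)
      * steeringMatrix d lam ϑ k i

noncomputable def arrayPhase (lam s : ℝ) (θ : Fin K → ℝ) (i : Fin K) : ℂ :=
  exp (I * ((2 * Real.pi / lam * s * Real.sin (θ i) : ℝ) : ℂ))

theorem star_arrayPhase_mul_self (lam s : ℝ) (θ : Fin K → ℝ) (i : Fin K) :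
    star (arrayPhase lam s θ i) * arrayPhase lam s θ i = 1 := by
  rw [star_def, conj_mul', arrayPhase, norm_exp_I_mul_ofReal, ofReal_one, one_pow]

theorem add_apply_rev_of_eq_add_mul {d : Fin M → ℝ} {d₁ δ : ℝ}
    (hd : ∀ k : Fin M, d k = d₁ + (k : ℕ) * δ) (k : Fin M) :
    d k + d (Fin.rev k) = 2 * d₁ + (M - 1) * δ := by
  have hk : (k : ℕ) + (Fin.rev k : ℕ) + 1 = M := by rw [Fin.val_rev]; omega
  have hk' : ((k : ℕ) : ℝ) + (Fin.rev k : ℕ) + 1 = M := by exact_mod_cast hk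
  rw [hd, hd]
  linear_combination δ * hk'

variable {d : Fin M → ℝ} {s : ℝ} (hs : ∀ k, d k + d (Fin.rev k) = s) (lam : ℝ)
include hs

theorem conj_steeringMatrix_apply (θ : Fin K → ℝ) (k : Fin M) (i : Fin K) :
    conj (steeringMatrix d lam θ k i)
      = steeringMatrix d lam θ (Fin.rev k) i * arrayPhase lam s θ i := by
  simp only [steeringMatrix, arrayPhase, of_apply, map_div₀, conj_ofReal, ← exp_conj, map_mul,
    map_neg, conj_I]
  rw [div_mul_eq_mul_div (exp _) ((Real.sqrt M : ℝ) : ℂ), ← exp_add, ← hs k]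
  push_cast
  ring_nf

theorem map_conj_steeringMatrix (θ : Fin K → ℝ) :
    (steeringMatrix d lam θ).map conj
      = (Fin.revPerm.permMatrix ℂ : Matrix (Fin M) (Fin M) ℂ) * steeringMatrix d lam θ
        * diagonal (arrayPhase lam s θ) := by
  ext k i
  rw [mul_diagonal, PEquiv.toMatrix_toPEquiv_mul, map_apply, conj_steeringMatrix_apply hs]
  rfl

theorem map_conj_steeringDerivative (ϑ : Fin K → ℝ) :
    (steeringDerivative d lam ϑ).map conj
      = (Fin.revPerm.permMatrix ℂ : Matrix (Fin M) (Fin M) ℂ)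
        * (steeringDerivative d lam ϑ
          + steeringMatrix d lam ϑ
            * diagonal fun i => I * ((2 * Real.pi / lam * Real.cos (ϑ i) : ℝ) : ℂ) * s)
        * diagonal (arrayPhase lam s ϑ) := by
  ext k i
  simp only [map_apply, mul_diagonal, PEquiv.toMatrix_toPEquiv_mul, submatrix_apply,
    Matrix.add_apply, steeringDerivative, of_apply, id, Fin.revPerm_apply]
  have hdk : ((d k : ℝ) : ℂ) = s - d (Fin.rev k) := by rw [← hs k]; push_cast; ring
  rw [map_mul, map_mul, map_mul, map_neg, conj_I, conj_ofReal, conj_ofReal,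
    conj_steeringMatrix_apply hs, hdk]
  ring

end UniformLinearArray

theorem stmt_10_general {M K : ℕ}
    (d : Fin M → ℝ) (d₁ δ : ℝ) (hd : ∀ k : Fin M, d k = d₁ + (k : ℕ) * δ)
    (lam : ℝ)
    (θ ϑ : Fin K → ℝ)
    (A B D : Matrix (Fin M) (Fin K) ℂ)
    (hA : A = Matrix.of fun k i =>
      Complex.exp (-Complex.I * ((2 * Real.pi / lam * d k * Real.sin (θ i) : ℝ) : ℂ))
        / ((Real.sqrt M : ℝ) : ℂ))
    (hB : B = Matrix.of fun k i =>
      Complex.exp (-Complex.I * ((2 * Real.pi / lam * d k * Real.sin (ϑ i) : ℝ) : ℂ))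
        / ((Real.sqrt M : ℝ) : ℂ))
    (hD : D = Matrix.of fun k i =>
      -Complex.I * ((2 * Real.pi / lam * Real.cos (ϑ i) : ℝ) : ℂ) * ((d k : ℝ) : ℂ) * B k i)
    (σ : Fin K → ℝ)
    (S : Matrix (Fin K) (Fin K) ℂ) (hS : S = Matrix.diagonal fun i => ((σ i : ℝ) : ℂ))
    (hBB : IsUnit (Bᴴ * B).det) :
    ∀ i : Fin K,
      ((((Bᴴ * B)⁻¹ * Bᴴ) * (A * S * Aᴴ)
        * ((1 : Matrix (Fin M) (Fin M) ℂ) - B * ((Bᴴ * B)⁻¹ * Bᴴ)) * D) i i).im = 0 := by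
  intro i
  subst hA hB hD hS
  have hs := add_apply_rev_of_eq_add_mul hd
  have hσ : (diagonal fun i => ((σ i : ℝ) : ℂ)).map conj = diagonal fun i => ((σ i : ℝ) : ℂ) := by
    simp only [diagonal_map (map_zero _), conj_ofReal]
  have hR := map_conj_mul_mul_conjTranspose
    (diagonal_mem_unitaryGroup (star_arrayPhase_mul_self lam _ θ))
    (map_conj_steeringMatrix hs lam θ) hσ (commute_diagonal _ _)
  have hY := map_conj_pinv_mul_mul_orthProj_mul (permMatrix_mem_unitaryGroup _)
    (diagonal_mem_unitaryGroup (star_arrayPhase_mul_self lam _ ϑ))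
    (map_conj_steeringMatrix hs lam ϑ) hBB hR (map_conj_steeringDerivative hs lam ϑ)
  exact conj_eq_iff_im.mp (conj_apply_self_of_map_conj_eq (star_arrayPhase_mul_self lam _ ϑ) hY i)

/-- Lemma 2 (ULA): each diagonal entry of B† (A Σ Aᴴ) P⊥ D is real. -/
theorem stmt_10 {M K : ℕ} (hMK : K < M)
    (d : Fin M → ℝ) (d₁ δ : ℝ) (hd : ∀ k : Fin M, d k = d₁ + (k : ℕ) * δ)
    (lam : ℝ) (hlam : 0 < lam)
    (θ ϑ : Fin K → ℝ)
    (A B D : Matrix (Fin M) (Fin K) ℂ)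
    (hA : A = Matrix.of fun k i =>
      Complex.exp (-Complex.I * ((2 * Real.pi / lam * d k * Real.sin (θ i) : ℝ) : ℂ))
        / ((Real.sqrt M : ℝ) : ℂ))
    (hB : B = Matrix.of fun k i =>
      Complex.exp (-Complex.I * ((2 * Real.pi / lam * d k * Real.sin (ϑ i) : ℝ) : ℂ))
        / ((Real.sqrt M : ℝ) : ℂ))
    (hD : D = Matrix.of fun k i =>
      -Complex.I * ((2 * Real.pi / lam * Real.cos (ϑ i) : ℝ) : ℂ) * ((d k : ℝ) : ℂ) * B k i)
    (σ : Fin K → ℝ)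
    (S : Matrix (Fin K) (Fin K) ℂ) (hS : S = Matrix.diagonal fun i => ((σ i : ℝ) : ℂ))
    (hBB : IsUnit (Bᴴ * B).det) :
    ∀ i : Fin K,
      ((((Bᴴ * B)⁻¹ * Bᴴ) * (A * S * Aᴴ)
        * ((1 : Matrix (Fin M) (Fin M) ℂ) - B * ((Bᴴ * B)⁻¹ * Bᴴ)) * D) i i).im = 0 :=
  stmt_10_general d d₁ δ hd lam θ ϑ A B D hA hB hD σ S hS hBB
end

section
/- Under the hypotheses of Lemma 2 (arithmetic sensor positions d_k, steering matrices A and B as defined there, real diagonal Σ, BᴴB invertible, B† = (BᴴB)⁻¹Bᴴ, P⊥ = I_M − B B†), define X_{i k} = (B† A Σ Aᴴ P⊥)_{i k} · B_{k i}. Then for every i and k one has X_{i, M+1−k} = conj(X_{i k}) (equivalently Re(X_{i,M+1−k}) = Re(X_{i k})), and moreover the row sums vanish: Σ_{k=1}^{M} X_{i k} = 0 for every i (equations (46)–(48) of the paper). -/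
open Matrix

lemma helper1 (x y z : ℝ) (h : z - y = x) (m : ℝ) :
    (starRingEnd ℂ) (Complex.exp (-Complex.I * (x:ℂ)) / ((m:ℝ):ℂ)) =
    Complex.exp (-Complex.I * (y:ℂ)) / ((m:ℝ):ℂ) * Complex.exp (Complex.I * (z:ℂ)) := by
  rw [map_div₀, ← Complex.exp_conj]
  have h1 : (starRingEnd ℂ) (-Complex.I * (x:ℂ)) = Complex.I * (x:ℂ) := by
    simp [Complex.conj_ofReal]
  have h2 : (-Complex.I * (y:ℂ) + Complex.I * (z:ℂ)) = Complex.I * (x:ℂ) := by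
    rw [← h]; push_cast; ring
  rw [h1, Complex.conj_ofReal, div_mul_eq_mul_div, ← Complex.exp_add, h2]

lemma helper2 (r : ℝ) : Complex.exp (Complex.I * (r:ℂ)) * (starRingEnd ℂ) (Complex.exp (Complex.I * (r:ℂ))) = 1 := by
  rw [← Complex.exp_conj, ← Complex.exp_add]
  have : Complex.I * (r:ℂ) + (starRingEnd ℂ) (Complex.I * (r:ℂ)) = 0 := by
    simp [Complex.conj_ofReal]
  rw [this, Complex.exp_zero]

lemma conj_key {M K : ℕ} (A B : Matrix (Fin M) (Fin K) ℂ) (S : Matrix (Fin K) (Fin K) ℂ)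
    (eA eB : Fin K → ℂ)
    (hAc : A.map (starRingEnd ℂ) = A.submatrix Fin.rev id * Matrix.diagonal eA)
    (hBc : B.map (starRingEnd ℂ) = B.submatrix Fin.rev id * Matrix.diagonal eB)
    (huA : ∀ i, eA i * (starRingEnd ℂ) (eA i) = 1)
    (huB : ∀ i, eB i * (starRingEnd ℂ) (eB i) = 1)
    (hSc : S.map (starRingEnd ℂ) = S)
    (hScomm : Matrix.diagonal eA * S = S * Matrix.diagonal eA)
    (hBB : IsUnit (Bᴴ * B).det) (i : Fin K) (k : Fin M) :
    ((((Bᴴ * B)⁻¹ * Bᴴ) * (A * S * Aᴴ)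
        * ((1 : Matrix (Fin M) (Fin M) ℂ) - B * ((Bᴴ * B)⁻¹ * Bᴴ))) i k.rev) * B k.rev i
      = starRingEnd ℂ ((((Bᴴ * B)⁻¹ * Bᴴ) * (A * S * Aᴴ)
        * ((1 : Matrix (Fin M) (Fin M) ℂ) - B * ((Bᴴ * B)⁻¹ * Bᴴ))) i k * B k i) := by
  set D := Matrix.diagonal eB with hD
  set D' := Matrix.diagonal (fun i => (starRingEnd ℂ) (eB i)) with hD'
  set DA := Matrix.diagonal eA with hDA
  set DA' := Matrix.diagonal (fun i => (starRingEnd ℂ) (eA i)) with hDA'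
  have hDD' : D * D' = 1 := by
    rw [hD, hD', Matrix.diagonal_mul_diagonal,
      show (fun i => eB i * (starRingEnd ℂ) (eB i)) = fun _ => (1:ℂ) from funext huB,
      Matrix.diagonal_one]
  have hD'D : D' * D = 1 := by
    rw [hD, hD', Matrix.diagonal_mul_diagonal,
      show (fun i => (starRingEnd ℂ) (eB i) * eB i) = fun _ => (1:ℂ) from
        funext (fun j => by rw [mul_comm]; exact huB j),
      Matrix.diagonal_one]
  have hADD' : DA * DA' = 1 := by
    rw [hDA, hDA', Matrix.diagonal_mul_diagonal,
      show (fun i => eA i * (starRingEnd ℂ) (eA i)) = fun _ => (1:ℂ) from funext huA,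
      Matrix.diagonal_one]
  have hN1 : (Bᴴ * B) * (Bᴴ * B)⁻¹ = 1 := Matrix.mul_nonsing_inv _ hBB
  have hN2 : (Bᴴ * B)⁻¹ * (Bᴴ * B) = 1 := Matrix.nonsing_inv_mul _ hBB
  -- conj of Bᴴ
  have hBHc : Bᴴ.map (starRingEnd ℂ) = D' * Bᴴ.submatrix id Fin.rev := by
    have h0 : Bᴴ.map (starRingEnd ℂ) = (B.map (starRingEnd ℂ))ᴴ := by
      ext a b; simp [Matrix.conjTranspose_apply, Matrix.map_apply]
    rw [h0, hBc, Matrix.conjTranspose_mul, Matrix.diagonal_conjTranspose,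
      Matrix.conjTranspose_submatrix]
    rfl
  have hAHc : Aᴴ.map (starRingEnd ℂ) = DA' * Aᴴ.submatrix id Fin.rev := by
    have h0 : Aᴴ.map (starRingEnd ℂ) = (A.map (starRingEnd ℂ))ᴴ := by
      ext a b; simp [Matrix.conjTranspose_apply, Matrix.map_apply]
    rw [h0, hAc, Matrix.conjTranspose_mul, Matrix.diagonal_conjTranspose,
      Matrix.conjTranspose_submatrix]
    rfl
  -- submatrix collapse lemmas
  have hmidB : Bᴴ.submatrix id Fin.rev * B.submatrix Fin.rev id = Bᴴ * B := by
    simpa using (Matrix.submatrix_mul Bᴴ B id Fin.rev id Fin.rev_bijective).symm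
  -- conj of BᴴB
  have hBHB : (Bᴴ * B).map (starRingEnd ℂ) = D' * (Bᴴ * B) * D := by
    rw [Matrix.map_mul, hBHc, hBc, Matrix.mul_assoc D', ← Matrix.mul_assoc (Bᴴ.submatrix id Fin.rev),
      hmidB, Matrix.mul_assoc D']
  -- conj of inverse
  have hNc : ((Bᴴ * B)⁻¹).map (starRingEnd ℂ) = D' * (Bᴴ * B)⁻¹ * D := by
    refine left_inv_eq_right_inv (a := (Bᴴ * B).map (starRingEnd ℂ)) ?_ ?_
    · rw [← Matrix.map_mul, hN2]
      exact Matrix.map_one _ (map_zero _) (map_one _)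
    · rw [hBHB]
      simp only [Matrix.mul_assoc]
      rw [← Matrix.mul_assoc D D', hDD', Matrix.one_mul,
        ← Matrix.mul_assoc Bᴴ B ((Bᴴ * B)⁻¹ * D),
        ← Matrix.mul_assoc (Bᴴ * B) (Bᴴ * B)⁻¹ D, hN1, Matrix.one_mul, hD'D]
  -- conj of G = A*S*Aᴴ
  have hGc : (A * S * Aᴴ).map (starRingEnd ℂ) = (A * S * Aᴴ).submatrix Fin.rev Fin.rev := by
    rw [Matrix.map_mul, Matrix.map_mul, hAc, hAHc, hSc]
    calc A.submatrix Fin.rev id * DA * S * (DA' * Aᴴ.submatrix id Fin.rev)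
        = A.submatrix Fin.rev id * (DA * S * DA') * Aᴴ.submatrix id Fin.rev := by
          simp only [Matrix.mul_assoc]
      _ = A.submatrix Fin.rev id * S * Aᴴ.submatrix id Fin.rev := by
          rw [hScomm, Matrix.mul_assoc S DA DA', hADD', Matrix.mul_one]
      _ = (A * S * Aᴴ).submatrix Fin.rev Fin.rev := by
          rw [show A.submatrix Fin.rev id * S = (A * S).submatrix Fin.rev id by
              simpa using (Matrix.submatrix_mul A S Fin.rev id id Function.bijective_id).symm]
          simpa using (Matrix.submatrix_mul (A * S) Aᴴ Fin.rev id Fin.rev Function.bijective_id).symm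
  -- conj of B† = N * Bᴴ
  have hBdc : ((Bᴴ * B)⁻¹ * Bᴴ).map (starRingEnd ℂ)
      = D' * ((Bᴴ * B)⁻¹ * Bᴴ).submatrix id Fin.rev := by
    rw [Matrix.map_mul, hNc, hBHc]
    calc D' * (Bᴴ * B)⁻¹ * D * (D' * Bᴴ.submatrix id Fin.rev)
        = D' * ((Bᴴ * B)⁻¹ * ((D * D') * Bᴴ.submatrix id Fin.rev)) := by
          simp only [Matrix.mul_assoc]
      _ = D' * ((Bᴴ * B)⁻¹ * Bᴴ.submatrix id Fin.rev) := by rw [hDD', Matrix.one_mul]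
      _ = D' * ((Bᴴ * B)⁻¹ * Bᴴ).submatrix id Fin.rev := by
          rw [show (Bᴴ * B)⁻¹ * Bᴴ.submatrix id Fin.rev = ((Bᴴ * B)⁻¹ * Bᴴ).submatrix id Fin.rev by
            simpa using (Matrix.submatrix_mul (Bᴴ * B)⁻¹ Bᴴ id id Fin.rev Function.bijective_id).symm]
  -- conj of P⊥
  have hone : ((1 : Matrix (Fin M) (Fin M) ℂ)).submatrix Fin.rev Fin.rev = 1 := by
    ext a b
    simp [Matrix.one_apply, Fin.rev_inj]
  have hPc : ((1 : Matrix (Fin M) (Fin M) ℂ) - B * ((Bᴴ * B)⁻¹ * Bᴴ)).map (starRingEnd ℂ)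
      = ((1 : Matrix (Fin M) (Fin M) ℂ) - B * ((Bᴴ * B)⁻¹ * Bᴴ)).submatrix Fin.rev Fin.rev := by
    rw [Matrix.map_sub _ (fun a b => map_sub _ a b), Matrix.map_one _ (map_zero _) (map_one _),
      Matrix.map_mul, hBc, hBdc]
    have hsplit : ((1 : Matrix (Fin M) (Fin M) ℂ) - B * ((Bᴴ * B)⁻¹ * Bᴴ)).submatrix Fin.rev Fin.rev
        = (1 : Matrix (Fin M) (Fin M) ℂ) - (B * ((Bᴴ * B)⁻¹ * Bᴴ)).submatrix Fin.rev Fin.rev := by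
      ext a b
      simp [Matrix.submatrix_apply, Matrix.sub_apply, Matrix.one_apply, Fin.rev_inj]
    rw [hsplit]
    congr 1
    calc B.submatrix Fin.rev id * D * (D' * ((Bᴴ * B)⁻¹ * Bᴴ).submatrix id Fin.rev)
        = B.submatrix Fin.rev id * ((D * D') * ((Bᴴ * B)⁻¹ * Bᴴ).submatrix id Fin.rev) := by
          simp only [Matrix.mul_assoc]
      _ = B.submatrix Fin.rev id * ((Bᴴ * B)⁻¹ * Bᴴ).submatrix id Fin.rev := by
          rw [hDD', Matrix.one_mul]
      _ = (B * ((Bᴴ * B)⁻¹ * Bᴴ)).submatrix Fin.rev Fin.rev := by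
          simpa using (Matrix.submatrix_mul B ((Bᴴ * B)⁻¹ * Bᴴ) Fin.rev id Fin.rev Function.bijective_id).symm
  -- conj of the whole M'
  have hMc : ((((Bᴴ * B)⁻¹ * Bᴴ) * (A * S * Aᴴ)
        * ((1 : Matrix (Fin M) (Fin M) ℂ) - B * ((Bᴴ * B)⁻¹ * Bᴴ)))).map (starRingEnd ℂ)
      = D' * ((((Bᴴ * B)⁻¹ * Bᴴ) * (A * S * Aᴴ)
        * ((1 : Matrix (Fin M) (Fin M) ℂ) - B * ((Bᴴ * B)⁻¹ * Bᴴ)))).submatrix id Fin.rev := by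
    rw [Matrix.map_mul, Matrix.map_mul, hBdc, hGc, hPc]
    rw [Matrix.mul_assoc D', Matrix.mul_assoc D']
    congr 1
    rw [show ((Bᴴ * B)⁻¹ * Bᴴ).submatrix id Fin.rev * (A * S * Aᴴ).submatrix Fin.rev Fin.rev
        = (((Bᴴ * B)⁻¹ * Bᴴ) * (A * S * Aᴴ)).submatrix id Fin.rev by
      simpa using (Matrix.submatrix_mul ((Bᴴ * B)⁻¹ * Bᴴ) (A * S * Aᴴ) id Fin.rev Fin.rev Fin.rev_bijective).symm]
    simpa using (Matrix.submatrix_mul (((Bᴴ * B)⁻¹ * Bᴴ) * (A * S * Aᴴ))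
      ((1 : Matrix (Fin M) (Fin M) ℂ) - B * ((Bᴴ * B)⁻¹ * Bᴴ)) id Fin.rev Fin.rev Fin.rev_bijective).symm
  -- finish entrywise
  have e1 : starRingEnd ℂ ((((Bᴴ * B)⁻¹ * Bᴴ) * (A * S * Aᴴ)
        * ((1 : Matrix (Fin M) (Fin M) ℂ) - B * ((Bᴴ * B)⁻¹ * Bᴴ))) i k)
      = (starRingEnd ℂ) (eB i) * (((Bᴴ * B)⁻¹ * Bᴴ) * (A * S * Aᴴ)
        * ((1 : Matrix (Fin M) (Fin M) ℂ) - B * ((Bᴴ * B)⁻¹ * Bᴴ))) i k.rev := by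
    have := congrFun (congrFun hMc i) k
    simpa [Matrix.map_apply, hD', Matrix.diagonal_mul, Matrix.submatrix_apply] using this
  have e2 : starRingEnd ℂ (B k i) = B k.rev i * eB i := by
    have := congrFun (congrFun hBc k) i
    simpa [Matrix.map_apply, hD, Matrix.mul_diagonal, Matrix.submatrix_apply] using this
  rw [_root_.map_mul, e1, e2]
  have h1 := huB i
  calc (((Bᴴ * B)⁻¹ * Bᴴ) * (A * S * Aᴴ)
        * ((1 : Matrix (Fin M) (Fin M) ℂ) - B * ((Bᴴ * B)⁻¹ * Bᴴ))) i k.rev * B k.rev i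
      = ((starRingEnd ℂ) (eB i) * (eB i)) * ((((Bᴴ * B)⁻¹ * Bᴴ) * (A * S * Aᴴ)
        * ((1 : Matrix (Fin M) (Fin M) ℂ) - B * ((Bᴴ * B)⁻¹ * Bᴴ))) i k.rev * B k.rev i) := by
        rw [mul_comm ((starRingEnd ℂ) (eB i)) (eB i), h1, one_mul]
      _ = _ := by ring


/-- Equations (46)–(48): for the ULA, X = (B† A Σ Aᴴ P⊥) ⊙ Bᵀ satisfies
X_{i,M+1−k} = conj(X_{i k}) and Σ_k X_{i k} = 0. -/
theorem stmt_11 {M K : ℕ} (hMK : K < M)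
    (d : Fin M → ℝ) (d₁ δ : ℝ) (hd : ∀ k : Fin M, d k = d₁ + (k : ℕ) * δ)
    (lam : ℝ) (hlam : 0 < lam)
    (θ ϑ : Fin K → ℝ)
    (A B : Matrix (Fin M) (Fin K) ℂ)
    (hA : A = Matrix.of fun k i =>
      Complex.exp (-Complex.I * ((2 * Real.pi / lam * d k * Real.sin (θ i) : ℝ) : ℂ))
        / ((Real.sqrt M : ℝ) : ℂ))
    (hB : B = Matrix.of fun k i =>
      Complex.exp (-Complex.I * ((2 * Real.pi / lam * d k * Real.sin (ϑ i) : ℝ) : ℂ))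
        / ((Real.sqrt M : ℝ) : ℂ))
    (σ : Fin K → ℝ)
    (S : Matrix (Fin K) (Fin K) ℂ) (hS : S = Matrix.diagonal fun i => ((σ i : ℝ) : ℂ))
    (hBB : IsUnit (Bᴴ * B).det)
    (X : Fin K → Fin M → ℂ)
    (hX : ∀ i k, X i k =
      ((((Bᴴ * B)⁻¹ * Bᴴ) * (A * S * Aᴴ)
        * ((1 : Matrix (Fin M) (Fin M) ℂ) - B * ((Bᴴ * B)⁻¹ * Bᴴ))) i k) * B k i) :
    (∀ i k, X i k.rev = starRingEnd ℂ (X i k)) ∧ (∀ i, ∑ k, X i k = 0) := by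
  set c : ℝ := 2 * d₁ + ((M : ℝ) - 1) * δ with hc
  have hsum : ∀ k : Fin M, d k + d k.rev = c := by
    intro k
    rw [hd k, hd k.rev]
    have h1 : ((k.rev : Fin M) : ℕ) + (k : ℕ) + 1 = M := by
      rw [Fin.val_rev]; omega
    have h2 : (((k.rev : Fin M) : ℕ) : ℝ) = (M : ℝ) - 1 - ((k : ℕ) : ℝ) := by
      have := congrArg (Nat.cast : ℕ → ℝ) h1
      push_cast at this; linarith
    rw [h2, hc]; ring
  set eA : Fin K → ℂ := fun i =>
    Complex.exp (Complex.I * ((2 * Real.pi / lam * c * Real.sin (θ i) : ℝ) : ℂ)) with heA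
  set eB : Fin K → ℂ := fun i =>
    Complex.exp (Complex.I * ((2 * Real.pi / lam * c * Real.sin (ϑ i) : ℝ) : ℂ)) with heB
  have huA : ∀ i, eA i * (starRingEnd ℂ) (eA i) = 1 := fun i => helper2 _
  have huB : ∀ i, eB i * (starRingEnd ℂ) (eB i) = 1 := fun i => helper2 _
  have hAc : A.map (starRingEnd ℂ) = A.submatrix Fin.rev id * Matrix.diagonal eA := by
    ext k i
    rw [Matrix.map_apply, Matrix.mul_diagonal, Matrix.submatrix_apply, hA]
    simp only [Matrix.of_apply, id, heA]
    exact helper1 _ _ _ (by linear_combination (-(2 * Real.pi / lam * Real.sin (θ i))) * hsum k) _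
  have hBc : B.map (starRingEnd ℂ) = B.submatrix Fin.rev id * Matrix.diagonal eB := by
    ext k i
    rw [Matrix.map_apply, Matrix.mul_diagonal, Matrix.submatrix_apply, hB]
    simp only [Matrix.of_apply, id, heB]
    exact helper1 _ _ _ (by linear_combination (-(2 * Real.pi / lam * Real.sin (ϑ i))) * hsum k) _
  have hSc : S.map (starRingEnd ℂ) = S := by
    rw [hS]; ext a b
    by_cases h : a = b <;> simp [Matrix.diagonal_apply, h, Complex.conj_ofReal]
  have hScomm : Matrix.diagonal eA * S = S * Matrix.diagonal eA := by
    rw [hS, Matrix.diagonal_mul_diagonal, Matrix.diagonal_mul_diagonal]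
    rw [show (fun i => eA i * ((σ i : ℝ) : ℂ)) = fun i => ((σ i : ℝ) : ℂ) * eA i from
      funext fun j => mul_comm _ _]
  constructor
  · intro i k
    rw [hX i k.rev, hX i k]
    exact conj_key A B S eA eB hAc hBc huA huB hSc hScomm hBB i k
  · intro i
    have hPB : ((1 : Matrix (Fin M) (Fin M) ℂ) - B * ((Bᴴ * B)⁻¹ * Bᴴ)) * B = 0 := by
      rw [Matrix.sub_mul, Matrix.one_mul, Matrix.mul_assoc, Matrix.mul_assoc,
        Matrix.nonsing_inv_mul _ hBB, Matrix.mul_one, sub_self]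
    have hMB : (((Bᴴ * B)⁻¹ * Bᴴ) * (A * S * Aᴴ)
          * ((1 : Matrix (Fin M) (Fin M) ℂ) - B * ((Bᴴ * B)⁻¹ * Bᴴ))) * B = 0 := by
      rw [Matrix.mul_assoc, hPB, Matrix.mul_zero]
    calc ∑ k, X i k = (((((Bᴴ * B)⁻¹ * Bᴴ) * (A * S * Aᴴ)
          * ((1 : Matrix (Fin M) (Fin M) ℂ) - B * ((Bᴴ * B)⁻¹ * Bᴴ))) * B)) i i := by
          rw [Matrix.mul_apply]; exact Finset.sum_congr rfl fun k _ => hX i k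
      _ = 0 := by rw [hMB]; rfl
end

section
/- Let V be an M×K complex matrix satisfying V = J V* (where J is the M×M exchange matrix) with VᴴV invertible, and let P⊥ = I_M − V (VᴴV)⁻¹ Vᴴ. Then J P⊥ J = (P⊥)*, equivalently J P⊥ = (P⊥)* J (equation (45) of the paper). -/
open Matrix

def exchangeMatrix (M : ℕ) : Matrix (Fin M) (Fin M) ℂ :=
  Matrix.of fun k l => if (k : ℕ) + (l : ℕ) + 2 = M + 1 then 1 else 0

lemma exch_apply {M : ℕ} (k l : Fin M) :
    exchangeMatrix M k l = if l = Fin.rev k then 1 else 0 := by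
  have hk := k.isLt; have hl := l.isLt
  have h : ((k : ℕ) + (l : ℕ) + 2 = M + 1) ↔ (l = Fin.rev k) := by
    rw [Fin.ext_iff, Fin.val_rev]; omega
  simp only [exchangeMatrix, Matrix.of_apply, h]

lemma exch_mul {M n : ℕ} (A : Matrix (Fin M) (Fin n) ℂ) :
    exchangeMatrix M * A = Matrix.of fun k l => A (Fin.rev k) l := by
  ext k l
  simp [Matrix.mul_apply, exch_apply]

lemma exch_mul_exch {M : ℕ} : exchangeMatrix M * exchangeMatrix M = 1 := by
  ext k l
  simp [exch_mul, exch_apply, Fin.rev_rev, Matrix.one_apply, eq_comm]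

lemma exch_transpose {M : ℕ} : (exchangeMatrix M)ᵀ = exchangeMatrix M := by
  ext k l
  simp only [Matrix.transpose_apply, exchangeMatrix, Matrix.of_apply]
  rw [Nat.add_comm (l : ℕ) (k : ℕ)]

/-- Equation (45): if V = J V* with VᴴV invertible, then J P⊥ J = (P⊥)*,
equivalently J P⊥ = (P⊥)* J. -/
theorem stmt_17 {M K : ℕ} (V : Matrix (Fin M) (Fin K) ℂ)
    (hV : V = exchangeMatrix M * V.map (starRingEnd ℂ))
    (hdet : IsUnit (Vᴴ * V).det)
    (Pperp : Matrix (Fin M) (Fin M) ℂ)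
    (hP : Pperp = (1 : Matrix (Fin M) (Fin M) ℂ) - V * ((Vᴴ * V)⁻¹ * Vᴴ)) :
    exchangeMatrix M * Pperp * exchangeMatrix M = Pperp.map (starRingEnd ℂ) ∧
    exchangeMatrix M * Pperp = Pperp.map (starRingEnd ℂ) * exchangeMatrix M := by
  set J := exchangeMatrix M with hJ
  have hJJ : J * J = 1 := exch_mul_exch
  have hconjV : V.map (starRingEnd ℂ) = J * V := by
    calc V.map (starRingEnd ℂ) = (J * J) * V.map (starRingEnd ℂ) := by
          rw [hJJ, Matrix.one_mul]
    _ = J * (J * V.map (starRingEnd ℂ)) := by rw [Matrix.mul_assoc]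
    _ = J * V := by rw [← hV]
  have hHmap : Vᴴ.map (starRingEnd ℂ) = Vᵀ := by
    ext k l
    simp [Matrix.conjTranspose_apply]
  have hmapT : (V.map (starRingEnd ℂ))ᵀ = Vᴴ := by
    ext k l
    simp [Matrix.conjTranspose_apply]
  have hVt : Vᵀ = Vᴴ * J := by
    conv_lhs => rw [hV]
    rw [Matrix.transpose_mul, hmapT]
    rw [show (exchangeMatrix M)ᵀ = J from exch_transpose]
  have hherm : (Vᴴ * V).map (starRingEnd ℂ) = Vᴴ * V := by
    rw [Matrix.map_mul, hHmap, hconjV, hVt, Matrix.mul_assoc, ← Matrix.mul_assoc J,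
      hJJ, Matrix.one_mul]
  have hinv : ((Vᴴ * V)⁻¹).map (starRingEnd ℂ) = (Vᴴ * V)⁻¹ := by
    have h1 : ((Vᴴ * V)⁻¹).map (starRingEnd ℂ) * (Vᴴ * V) = 1 := by
      calc ((Vᴴ * V)⁻¹).map (starRingEnd ℂ) * (Vᴴ * V)
          = ((Vᴴ * V)⁻¹).map (starRingEnd ℂ) * (Vᴴ * V).map (starRingEnd ℂ) := by
            rw [hherm]
        _ = ((Vᴴ * V)⁻¹ * (Vᴴ * V)).map (starRingEnd ℂ) := (Matrix.map_mul).symm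
        _ = (1 : Matrix (Fin K) (Fin K) ℂ).map (starRingEnd ℂ) := by
            rw [Matrix.nonsing_inv_mul _ hdet]
        _ = 1 := Matrix.map_one _ (map_zero _) (map_one _)
    exact (Matrix.inv_eq_left_inv h1).symm
  have hPmap : Pperp.map (starRingEnd ℂ) = J * Pperp * J := by
    have hsub : ((1 : Matrix (Fin M) (Fin M) ℂ) - V * ((Vᴴ * V)⁻¹ * Vᴴ)).map (starRingEnd ℂ)
        = (1 : Matrix (Fin M) (Fin M) ℂ).map (starRingEnd ℂ)
          - (V * ((Vᴴ * V)⁻¹ * Vᴴ)).map (starRingEnd ℂ) :=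
      Matrix.map_sub (⇑(starRingEnd ℂ)) (fun a b => map_sub _ a b) _ _
    rw [hP, hsub, Matrix.map_mul, Matrix.map_mul, hinv, hHmap, hconjV, hVt]
    rw [Matrix.map_one _ (map_zero _) (map_one _)]
    rw [Matrix.mul_sub, Matrix.sub_mul, Matrix.mul_one, hJJ]
    congr 1
    simp only [Matrix.mul_assoc]
  refine ⟨hPmap.symm, ?_⟩
  have h2 : J * Pperp = (J * Pperp * J) * J := by
    rw [Matrix.mul_assoc (J * Pperp), hJJ, Matrix.mul_one]
  rw [h2, ← hPmap]
end
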